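/- arXiv:2006.03990 — 10 statements merged into one kernel-verified Lean document; each statement's English description precedes it below -/
import Mathlib

section
/- Let f, g : [a,b] → ℝ be integrable functions with 0 < m ≤ f(x) ≤ M < ∞ and 0 < n ≤ g(x) ≤ N < ∞ for all x ∈ [a,b]. Then ∫_a^b f(x)² dx · ∫_a^b g(x)² dx ≤ (1/4)(√(MN/(mn)) + √(mn/(MN)))² (∫_a^b f(x)g(x) dx)². -/
open MeasureTheory intervalIntegral

theorem polya_szego
    (a b m M n N : ℝ) (hab : a < b) (f g : ℝ → ℝ)
    (hm : 0 < m) (hn : 0 < n)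
    (hf : IntervalIntegrable f volume a b)
    (hg : IntervalIntegrable g volume a b)
    (hf2 : IntervalIntegrable (fun x => f x ^ 2) volume a b)
    (hg2 : IntervalIntegrable (fun x => g x ^ 2) volume a b)
    (hfg : IntervalIntegrable (fun x => f x * g x) volume a b)
    (hfb : ∀ x ∈ Set.Icc a b, m ≤ f x ∧ f x ≤ M)
    (hgb : ∀ x ∈ Set.Icc a b, n ≤ g x ∧ g x ≤ N) :
    (∫ x in a..b, f x ^ 2) * (∫ x in a..b, g x ^ 2) ≤
      (1 / 4) * (Real.sqrt (M * N / (m * n)) + Real.sqrt (m * n / (M * N))) ^ 2 *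
        (∫ x in a..b, f x * g x) ^ 2 := by
  have ha : a ∈ Set.Icc a b := ⟨le_rfl, hab.le⟩
  have hM : 0 < M := hm.trans_le ((hfb a ha).1.trans (hfb a ha).2)
  have hN : 0 < N := hn.trans_le ((hgb a ha).1.trans (hgb a ha).2)
  set A := ∫ x in a..b, f x ^ 2 with hA
  set B := ∫ x in a..b, g x ^ 2 with hB
  set C := ∫ x in a..b, f x * g x with hC
  have hApos : 0 ≤ A := intervalIntegral.integral_nonneg hab.le (fun x _ => sq_nonneg _)
  have hBpos : 0 ≤ B := intervalIntegral.integral_nonneg hab.le (fun x _ => sq_nonneg _)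
  have hCpos : 0 < C := by
    have h1 : (∫ x in a..b, (m * n : ℝ)) ≤ C := by
      apply intervalIntegral.integral_mono_on hab.le intervalIntegrable_const hfg
      intro x hx
      exact mul_le_mul (hfb x hx).1 (hgb x hx).1 hn.le ((hm.trans_le (hfb x hx).1).le)
    have h2 : (0:ℝ) < (b - a) * (m * n) := by
      apply mul_pos (by linarith) (mul_pos hm hn)
    rw [intervalIntegral.integral_const, smul_eq_mul] at h1
    linarith
  -- key integrated inequality
  have key : (n*N) * A + (m*M) * B ≤ (m*n + M*N) * C := by
    have h1 : (∫ x in a..b, ((n*N) * f x ^ 2 + (m*M) * g x ^ 2)) ≤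
        ∫ x in a..b, (m*n + M*N) * (f x * g x) := by
      apply intervalIntegral.integral_mono_on hab.le
        ((hf2.const_mul _).add (hg2.const_mul _)) (hfg.const_mul _)
      intro x hx
      obtain ⟨h1, h2⟩ := hfb x hx
      obtain ⟨h3, h4⟩ := hgb x hx
      have e1 : 0 ≤ N * f x - m * g x := by nlinarith
      have e2 : 0 ≤ M * g x - n * f x := by nlinarith
      nlinarith [mul_nonneg e1 e2]
    rw [intervalIntegral.integral_add (hf2.const_mul _) (hg2.const_mul _),
      intervalIntegral.integral_const_mul, intervalIntegral.integral_const_mul,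
      intervalIntegral.integral_const_mul] at h1
    exact h1
  have h4 : 4 * (m*M*n*N) * (A*B) ≤ (m*n + M*N)^2 * C^2 := by
    have hsum : 0 ≤ (n*N) * A + (m*M) * B := by positivity
    have hsq : ((n*N) * A + (m*M) * B)^2 ≤ ((m*n + M*N) * C)^2 := by
      apply pow_le_pow_left₀ hsum key
    nlinarith [sq_nonneg ((n*N) * A - (m*M) * B)]
  set s := Real.sqrt (M * N / (m * n)) with hs
  set t := Real.sqrt (m * n / (M * N)) with ht
  have hs2 : s^2 = M * N / (m * n) := Real.sq_sqrt (by positivity)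
  have ht2 : t^2 = m * n / (M * N) := Real.sq_sqrt (by positivity)
  have hst : s * t = 1 := by
    rw [hs, ht, ← Real.sqrt_mul (by positivity)]
    rw [show M * N / (m * n) * (m * n / (M * N)) = 1 by field_simp]
    exact Real.sqrt_one
  have hid : (m*M*n*N) * (s + t)^2 = (m*n + M*N)^2 := by
    have h : (s + t)^2 = s^2 + 2*(s*t) + t^2 := by ring
    rw [h, hs2, ht2, hst]
    field_simp
    ring
  have hpos : 0 < m*M*n*N := by positivity
  nlinarith [h4, hid, hpos, pow_pos hCpos 2, mul_pos hpos (pow_pos hCpos 2)]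
end

section
/- Let f, g : [a,b] → ℝ₊ be integrable functions with 0 < m ≤ f(x) ≤ M < ∞ and 0 < n ≤ g(x) ≤ N < ∞ for x ∈ [a,b]. Then |T(f,g;a,b)| ≤ (1/4) · ((M-m)(N-n)/√(mnMN)) · ((1/(b-a))∫_a^b f(x) dx) · ((1/(b-a))∫_a^b g(x) dx), where T(f,g;a,b) = (1/(b-a))∫_a^b fg - ((1/(b-a))∫_a^b f)((1/(b-a))∫_a^b g). -/
/-!
Normalise Lebesgue measure on `(a, b]` to a probability measure, so that `T(f, g; a, b)` is the
covariance of `f` and `g`. By Cauchy–Schwarz, `cov(f, g)² ≤ Var f · Var g`, and the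
Bhatia–Davis inequality `Var f ≤ (M - 𝔼 f)(𝔼 f - m)` combined with
`4mM (M - t)(t - m) ≤ (M - m)² t²` (the difference is `((M + m) t - 2mM)²`) gives
`Var f ≤ (M - m)² / (4mM) · (𝔼 f)²`, and likewise for `g`.
-/

open MeasureTheory ProbabilityTheory

namespace ProbabilityTheory

variable {Ω : Type*} {mΩ : MeasurableSpace Ω} {μ : Measure Ω} {X Y : Ω → ℝ}

lemma covariance_sq_le_variance_mul_variance [IsFiniteMeasure μ] (hX : MemLp X 2 μ)
    (hY : MemLp Y 2 μ) : cov[X, Y; μ] ^ 2 ≤ Var[X; μ] * Var[Y; μ] := by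
  have hquad : ∀ t : ℝ, 0 ≤ Var[Y; μ] * (t * t) + 2 * cov[X, Y; μ] * t + Var[X; μ] := by
    intro t
    have hsum := variance_add hX (hY.const_smul t)
    rw [covariance_smul_right, variance_smul] at hsum
    nlinarith [variance_nonneg (X + t • Y) μ]
  have hdiscrim := discrim_le_zero hquad
  rw [discrim] at hdiscrim
  nlinarith

lemma variance_le_of_mem_Icc_of_pos [IsProbabilityMeasure μ] {m M : ℝ} (hm : 0 < m)
    (h : ∀ᵐ ω ∂μ, X ω ∈ Set.Icc m M) (hX : AEMeasurable X μ) :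
    Var[X; μ] ≤ (M - m) ^ 2 / (4 * (m * M)) * μ[X] ^ 2 := by
  obtain ⟨ω, hω⟩ := h.exists
  have hM : 0 < M := hm.trans_le (hω.1.trans hω.2)
  calc Var[X; μ] ≤ (M - μ[X]) * (μ[X] - m) := variance_le_sub_mul_sub h hX
    _ ≤ (M - m) ^ 2 / (4 * (m * M)) * μ[X] ^ 2 := by
      rw [div_mul_eq_mul_div, le_div_iff₀ (by positivity)]
      nlinarith [sq_nonneg ((M + m) * μ[X] - 2 * m * M)]

theorem abs_covariance_le_of_mem_Icc_of_pos [IsProbabilityMeasure μ] {m M n N : ℝ}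
    (hm : 0 < m) (hn : 0 < n) (hXb : ∀ᵐ ω ∂μ, X ω ∈ Set.Icc m M)
    (hYb : ∀ᵐ ω ∂μ, Y ω ∈ Set.Icc n N) (hX : AEMeasurable X μ) (hY : AEMeasurable Y μ) :
    |cov[X, Y; μ]| ≤ 1 / 4 * ((M - m) * (N - n) / √(m * n * M * N)) * μ[X] * μ[Y] := by
  obtain ⟨ω, hXω, hYω⟩ := (hXb.and hYb).exists
  have hmM : 0 ≤ M - m := sub_nonneg.2 (hXω.1.trans hXω.2)
  have hnN : 0 ≤ N - n := sub_nonneg.2 (hYω.1.trans hYω.2)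
  have hM : 0 < M := by linarith
  have hN : 0 < N := by linarith
  have hEX : 0 ≤ μ[X] := integral_nonneg_of_ae (hXb.mono fun _ h ↦ hm.le.trans h.1)
  have hEY : 0 ≤ μ[Y] := integral_nonneg_of_ae (hYb.mono fun _ h ↦ hn.le.trans h.1)
  have hsqrt : √(m * n * M * N) ^ 2 = m * n * M * N := Real.sq_sqrt (by positivity)
  have hVX := variance_le_of_mem_Icc_of_pos hm hXb hX
  have hVY := variance_le_of_mem_Icc_of_pos hn hYb hY
  refine abs_le_of_sq_le_sq ?_ (by positivity)
  calc cov[X, Y; μ] ^ 2 ≤ Var[X; μ] * Var[Y; μ] :=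
        covariance_sq_le_variance_mul_variance (memLp_of_bounded hXb hX.aestronglyMeasurable 2)
          (memLp_of_bounded hYb hY.aestronglyMeasurable 2)
    _ ≤ (M - m) ^ 2 / (4 * (m * M)) * μ[X] ^ 2 * ((N - n) ^ 2 / (4 * (n * N)) * μ[Y] ^ 2) :=
        mul_le_mul hVX hVY (variance_nonneg _ _) ((variance_nonneg _ _).trans hVX)
    _ = (1 / 4 * ((M - m) * (N - n) / √(m * n * M * N)) * μ[X] * μ[Y]) ^ 2 := by
        simp only [mul_pow, div_pow, hsqrt]
        field_simp

end ProbabilityTheory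

lemma integral_cond_Ioc {a b : ℝ} (hab : a ≤ b) (f : ℝ → ℝ) :
    ∫ x, f x ∂volume[|Set.Ioc a b] = (b - a)⁻¹ * ∫ x in a..b, f x := by
  rw [ProbabilityTheory.cond, integral_smul_measure, intervalIntegral.integral_of_le hab,
    Real.volume_Ioc, ENNReal.toReal_inv, ENNReal.toReal_ofReal (sub_nonneg.2 hab), smul_eq_mul]

theorem dragomir_diamond_general
    (a b m M n N : ℝ) (hab : a < b) (f g : ℝ → ℝ)
    (hm : 0 < m) (hn : 0 < n)
    (hf : IntervalIntegrable f volume a b)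
    (hg : IntervalIntegrable g volume a b)
    (hfb : ∀ x ∈ Set.Icc a b, m ≤ f x ∧ f x ≤ M)
    (hgb : ∀ x ∈ Set.Icc a b, n ≤ g x ∧ g x ≤ N) :
    |(1 / (b - a)) * ∫ x in a..b, f x * g x -
      ((1 / (b - a)) * ∫ x in a..b, f x) *
      ((1 / (b - a)) * ∫ x in a..b, g x)| ≤
    (1 / 4) * ((M - m) * (N - n) / Real.sqrt (m * n * M * N)) *
      ((1 / (b - a)) * ∫ x in a..b, f x) *
      ((1 / (b - a)) * ∫ x in a..b, g x) := by
  set ν := volume[|Set.Ioc a b]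
  have : IsProbabilityMeasure ν := cond_isProbabilityMeasure_of_finite (by simp [hab]) (by simp)
  have hbounds {h : ℝ → ℝ} {l u : ℝ} (hb : ∀ x ∈ Set.Icc a b, l ≤ h x ∧ h x ≤ u) :
      ∀ᵐ x ∂ν, h x ∈ Set.Icc l u :=
    ae_cond_of_forall_mem measurableSet_Ioc fun x hx ↦ hb x (Set.Ioc_subset_Icc_self hx)
  have hmeas {h : ℝ → ℝ} (hi : IntervalIntegrable h volume a b) : AEMeasurable h ν :=
    (hi.1.aestronglyMeasurable.aemeasurable).smul_measure _
  have hfL := memLp_of_bounded (hbounds hfb) (hmeas hf).aestronglyMeasurable 2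
  have hgL := memLp_of_bounded (hbounds hgb) (hmeas hg).aestronglyMeasurable 2
  -- The integral `∫ x in a..b, f x * g x - c` in the statement extends over the whole difference.
  have hcov : ∫ x, (f x * g x - ν[f] * ν[g]) ∂ν = cov[f, g; ν] := by
    rw [integral_sub (f := fun x ↦ f x * g x) (hfL.integrable_mul hgL) (integrable_const _),
      integral_const, probReal_univ, one_smul, covariance_eq_sub hfL hgL, Pi.mul_def]
  simp only [one_div, ← integral_cond_Ioc hab.le]
  rw [hcov]
  simpa only [one_div] using
    abs_covariance_le_of_mem_Icc_of_pos hm hn (hbounds hfb) (hbounds hgb) (hmeas hf) (hmeas hg)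

theorem dragomir_diamond
    (a b m M n N : ℝ) (hab : a < b) (f g : ℝ → ℝ)
    (hm : 0 < m) (hn : 0 < n)
    (hf : IntervalIntegrable f volume a b)
    (hg : IntervalIntegrable g volume a b)
    (hfg : IntervalIntegrable (fun x => f x * g x) volume a b)
    (hfb : ∀ x ∈ Set.Icc a b, m ≤ f x ∧ f x ≤ M)
    (hgb : ∀ x ∈ Set.Icc a b, n ≤ g x ∧ g x ≤ N) :
    |(1 / (b - a)) * ∫ x in a..b, f x * g x -
      ((1 / (b - a)) * ∫ x in a..b, f x) *
      ((1 / (b - a)) * ∫ x in a..b, g x)| ≤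
    (1 / 4) * ((M - m) * (N - n) / Real.sqrt (m * n * M * N)) *
      ((1 / (b - a)) * ∫ x in a..b, f x) *
      ((1 / (b - a)) * ∫ x in a..b, g x) :=
  dragomir_diamond_general a b m M n N hab f g hm hn hf hg hfb hgb
end

section
/- The constant 1/4 in the Dragomir–Diamond inequality is best possible: if a constant c > 0 satisfies |T(f,f;a,b)| ≤ c·((M-m)²/(mM))·((1/(b-a))∫_a^b f)² for all integrable f with 0 < m ≤ f ≤ M on [a,b], then c ≥ 1/4. -/
open MeasureTheory intervalIntegral

lemma step_intable (p q u v w : ℝ) :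
    IntervalIntegrable (fun x => if x < w then p else q) volume u v := by
  apply IntervalIntegrable.mono_fun (_root_.intervalIntegrable_const (c := |p| + |q|))
  · exact (Measurable.ite measurableSet_Iio measurable_const measurable_const).aestronglyMeasurable
  · filter_upwards with x
    simp only [Real.norm_eq_abs]
    rw [abs_of_nonneg (by positivity : (0:ℝ) ≤ |p| + |q|)]
    split <;> [linarith [abs_nonneg q]; linarith [abs_nonneg p]]

lemma step_integral (p q u v : ℝ) (huv : u ≤ v) (w : ℝ) (h1 : u ≤ w) (h2 : w ≤ v) :
    (∫ x in u..v, (if x < w then p else q)) = p * (w - u) + q * (v - w) := by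
  rw [← intervalIntegral.integral_add_adjacent_intervals (b := w)
    (step_intable p q u w w) (step_intable p q w v w)]
  have e1 : (∫ x in u..w, (if x < w then p else q)) = p * (w - u) := by
    rw [intervalIntegral.integral_congr_ae (g := fun _ => p)]
    · simp [mul_comm]
    · have : (volume : Measure ℝ) {(w : ℝ)} = 0 := measure_singleton w
      filter_upwards [measure_eq_zero_iff_ae_notMem.mp this] with x hx hxI
      rw [Set.uIoc_of_le h1] at hxI
      have : x < w := lt_of_le_of_ne hxI.2 (by simpa using hx)
      simp [this]
  have e2 : (∫ x in w..v, (if x < w then p else q)) = q * (v - w) := by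
    rw [intervalIntegral.integral_congr (g := fun _ => q)]
    · simp [mul_comm]
    · intro x hx
      rw [Set.uIcc_of_le h2] at hx
      simp [not_lt.mpr hx.1]
  rw [e1, e2]

theorem dragomir_diamond_sharp
    (a b : ℝ) (hab : a < b) (c : ℝ) (hc : 0 < c)
    (H : ∀ (f : ℝ → ℝ) (m M : ℝ), 0 < m → m ≤ M →
      IntervalIntegrable f volume a b →
      IntervalIntegrable (fun x => f x ^ 2) volume a b →
      (∀ x ∈ Set.Icc a b, m ≤ f x ∧ f x ≤ M) →
      |(1 / (b - a)) * ∫ x in a..b, f x ^ 2 -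
        ((1 / (b - a)) * ∫ x in a..b, f x) ^ 2| ≤
      c * ((M - m) ^ 2 / (m * M)) * ((1 / (b - a)) * ∫ x in a..b, f x) ^ 2) :
    c ≥ 1 / 4 := by
  have key : ∀ ε : ℝ, 0 < ε → ε < 1 → 1 - ε ^ 2 ≤ 4 * c := by
    intro ε hε0 hε1
    set w : ℝ := (a + b) / 2 with hw
    set m : ℝ := 1 - ε
    set M : ℝ := 1 + ε
    have hm : 0 < m := by simp only [m]; linarith
    have hmM : m ≤ M := by simp only [m, M]; linarith
    have haw : a ≤ w := by simp only [hw]; linarith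
    have hwb : w ≤ b := by simp only [hw]; linarith
    set f : ℝ → ℝ := fun x => if x < w then m else M with hf
    have hint : IntervalIntegrable f volume a b := step_intable m M a b w
    have hsq : (fun x => f x ^ 2) = fun x => if x < w then m ^ 2 else M ^ 2 := by
      funext x; simp only [f]; split <;> rfl
    have hint2 : IntervalIntegrable (fun x => f x ^ 2) volume a b := by
      rw [hsq]; exact step_intable _ _ a b w
    have hbd : ∀ x ∈ Set.Icc a b, m ≤ f x ∧ f x ≤ M := by
      intro x _; simp only [f]; split <;> constructor <;> linarith
    have hba : (0:ℝ) < b - a := by linarith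
    have hwa : w - a = (b - a) / 2 := by simp only [hw]; ring
    have hbw : b - w = (b - a) / 2 := by simp only [hw]; ring
    have e1 : (∫ x in a..b, f x) = m * (w - a) + M * (b - w) :=
      step_integral m M a b (le_of_lt hab) w haw hwb
    have hH := H f m M hm hmM hint hint2 hbd
    rw [e1, hwa, hbw] at hH
    have hmean : (1 / (b - a)) * (m * ((b - a) / 2) + M * ((b - a) / 2)) = 1 := by
      field_simp [m, M]; ring
    rw [hmean] at hH
    have e3 : (∫ x in a..b, (f x ^ 2 - 1 ^ 2))
        = (m ^ 2 - 1 ^ 2) * (w - a) + (M ^ 2 - 1 ^ 2) * (b - w) := by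
      have h4 : (fun x => f x ^ 2 - 1 ^ 2)
          = fun x => if x < w then m ^ 2 - 1 ^ 2 else M ^ 2 - 1 ^ 2 := by
        funext x; simp only [f]; split <;> rfl
      calc (∫ x in a..b, (f x ^ 2 - 1 ^ 2))
          = ∫ x in a..b, (if x < w then m ^ 2 - 1 ^ 2 else M ^ 2 - 1 ^ 2) := by rw [h4]
        _ = _ := step_integral _ _ a b (le_of_lt hab) w haw hwb
    rw [e3, hwa, hbw] at hH
    have hval : (1 / (b - a)) * ((m ^ 2 - 1 ^ 2) * ((b - a) / 2)
        + (M ^ 2 - 1 ^ 2) * ((b - a) / 2)) = ε ^ 2 := by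
      field_simp [m, M]; ring
    rw [hval, abs_of_nonneg (by positivity : (0:ℝ) ≤ ε ^ 2)] at hH
    have hprod : m * M = 1 - ε ^ 2 := by simp only [m, M]; ring
    have hdiff : (M - m) ^ 2 = 4 * ε ^ 2 := by simp only [m, M]; ring
    rw [hprod, hdiff, one_pow, mul_one] at hH
    have h1e : (0:ℝ) < 1 - ε ^ 2 := by nlinarith
    have h2 : ε ^ 2 * (1 - ε ^ 2) ≤ c * (4 * ε ^ 2 / (1 - ε ^ 2)) * (1 - ε ^ 2) :=
      mul_le_mul_of_nonneg_right hH h1e.le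
    have h3 : c * (4 * ε ^ 2 / (1 - ε ^ 2)) * (1 - ε ^ 2) = c * (4 * ε ^ 2) := by
      field_simp
    rw [h3] at h2
    nlinarith [h2, pow_pos hε0 2]
  by_contra hlt
  push_neg at hlt
  set ε : ℝ := min (1/2) ((1 - 4*c)/2) with hε
  have h4c : 0 < 1 - 4*c := by linarith
  have hε0 : 0 < ε := lt_min (by norm_num) (by linarith)
  have hε1 : ε < 1 := lt_of_le_of_lt (min_le_left _ _) (by norm_num)
  have hεsq : ε ^ 2 < 1 - 4*c := by
    have h1 : ε ≤ 1/2 := min_le_left _ _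
    have h2 : ε ≤ (1 - 4*c)/2 := min_le_right _ _
    nlinarith
  have := key ε hε0 hε1
  linarith
end

section
/- For the step function f on [a,b] equal to m on [a,(a+b)/2] and M on [(a+b)/2,b] (0 < m < M), one has T(f,f;a,b) = (M-m)²/4 and (1/(b-a))∫_a^b f = (m+M)/2; consequently any constant c with |T(f,f;a,b)| ≤ c·((M-m)²/(mM))·((1/(b-a))∫_a^b f)² must satisfy mM ≤ c(M+m)². -/
open MeasureTheory intervalIntegral

/-!
Since `f` takes each of its two values on half of `[a, b]`, the average of any function of `f`
is the arithmetic mean of its two values; in particular `T = (m² + M²)/2 - ((m + M)/2)² =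
(M - m)²/4`. Substituting into the assumed bound and cancelling `(M - m)²/4 > 0` leaves
`1 ≤ c (M + m)² / (m M)`.
-/

theorem integral_ite_le {a b c : ℝ} (hac : a ≤ c) (hcb : c ≤ b) (p q : ℝ) :
    ∫ x in a..b, (if x ≤ c then p else q) = (c - a) * p + (b - c) * q := by
  have hsplit : (fun x : ℝ => if x ≤ c then p else q) =
      fun x => {x : ℝ | x ≤ c}.indicator (fun _ => p - q) x + q := by
    funext x
    by_cases hx : x ≤ c <;> simp [hx]
  have hind : IntervalIntegrable ({x : ℝ | x ≤ c}.indicator fun _ => p - q) volume a b :=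
    intervalIntegrable_iff.mpr <|
      (integrableOn_const measure_Ioc_lt_top.ne).indicator measurableSet_Iic
  rw [hsplit, integral_add hind intervalIntegrable_const, integral_indicator ⟨hac, hcb⟩]
  simp only [intervalIntegral.integral_const, smul_eq_mul]
  ring

theorem average_ite_le_midpoint {a b : ℝ} (hab : a < b) (p q : ℝ) :
    (1 / (b - a)) * ∫ x in a..b, (if x ≤ (a + b) / 2 then p else q) = (p + q) / 2 := by
  have hba : b - a ≠ 0 := (sub_pos.mpr hab).ne'
  rw [integral_ite_le (by linarith) (by linarith)]
  field_simp
  ring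

theorem mul_le_mul_add_sq_of_abs_le {m M c : ℝ} (hmM₀ : 0 < m * M) (hmM : m ≠ M)
    (h : |(M - m) ^ 2 / 4| ≤ c * ((M - m) ^ 2 / (m * M)) * ((m + M) / 2) ^ 2) :
    m * M ≤ c * (M + m) ^ 2 := by
  have hgap : 0 < (M - m) ^ 2 / 4 := by
    have : M - m ≠ 0 := sub_ne_zero.mpr hmM.symm
    positivity
  have hrhs : c * ((M - m) ^ 2 / (m * M)) * ((m + M) / 2) ^ 2 =
      (M - m) ^ 2 / 4 * (c * (M + m) ^ 2 / (m * M)) := by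
    field_simp
    ring
  rw [abs_of_pos hgap, hrhs] at h
  have := le_of_mul_le_mul_left ((mul_one _).trans_le h) hgap
  rwa [le_div_iff₀ hmM₀, one_mul] at this

theorem step_function_chebyshev
    (a b m M : ℝ) (hab : a < b) (hm : 0 < m) (hmM : m < M)
    (f : ℝ → ℝ) (hf : f = fun x => if x ≤ (a + b) / 2 then m else M) :
    ((1 / (b - a)) * ∫ x in a..b, f x ^ 2 -
        ((1 / (b - a)) * ∫ x in a..b, f x) ^ 2 = (M - m) ^ 2 / 4) ∧
    ((1 / (b - a)) * ∫ x in a..b, f x = (m + M) / 2) ∧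
    (∀ c : ℝ,
      |(1 / (b - a)) * ∫ x in a..b, f x ^ 2 -
        ((1 / (b - a)) * ∫ x in a..b, f x) ^ 2| ≤
        c * ((M - m) ^ 2 / (m * M)) * ((1 / (b - a)) * ∫ x in a..b, f x) ^ 2 →
      m * M ≤ c * (M + m) ^ 2) := by
  have hmean : (1 / (b - a)) * ∫ x in a..b, f x = (m + M) / 2 := by
    subst hf
    exact average_ite_le_midpoint hab m M
  rw [hmean]
  -- The integral binds `f x ^ 2 - mean ^ 2`, so `T` is stated as the average of that difference.
  have hT : (1 / (b - a)) * ∫ x in a..b, f x ^ 2 - ((m + M) / 2) ^ 2 = (M - m) ^ 2 / 4 := by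
    simp only [hf, apply_ite (fun y => y ^ 2 - ((m + M) / 2) ^ 2)]
    rw [average_ite_le_midpoint hab]
    ring
  rw [hT]
  exact ⟨rfl, rfl, fun c => mul_le_mul_add_sq_of_abs_le
    (mul_pos hm (hm.trans hmM)) hmM.ne⟩
end

section
/- Let α > 0, p₁ ∈ (0,1], x > 0, and let f, g, v₁, v₂, w₁, w₂ be positive integrable functions on [0,x] with 0 < v₁(τ) ≤ f(τ) ≤ v₂(τ) and 0 < w₁(τ) ≤ g(τ) ≤ w₂(τ) for τ ∈ [0,x]. Define the generalized proportional fractional integral I^{α,p₁}[h](x) = (1/(p₁^α Γ(α))) ∫₀^x e^{((p₁-1)/p₁)(x-τ)} (x-τ)^{α-1} h(τ) dτ. Then I^{α,p₁}[w₁w₂f²](x) · I^{α,p₁}[v₁v₂g²](x) ≤ (1/4) (I^{α,p₁}[(v₁w₁ + v₂w₂)fg](x))². -/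
open MeasureTheory

/-- Kernel of the generalized proportional fractional (GPF) integral. -/
noncomputable def gpfKernel (α p x τ : ℝ) : ℝ :=
  Real.exp (((p - 1) / p) * (x - τ)) * (x - τ) ^ (α - 1)

/-- Generalized proportional fractional integral
`I^{α,p}[h](x) = (1/(p^α Γ(α))) ∫₀ˣ e^{((p-1)/p)(x-τ)} (x-τ)^{α-1} h(τ) dτ`. -/
noncomputable def gpf (α p x : ℝ) (h : ℝ → ℝ) : ℝ :=
  (1 / (p ^ α * Real.Gamma α)) * ∫ τ in (0:ℝ)..x, gpfKernel α p x τ * h τ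

/-- Integrability of the GPF integrand. -/
def GpfIntegrable (α p x : ℝ) (h : ℝ → ℝ) : Prop :=
  IntervalIntegrable (fun τ => gpfKernel α p x τ * h τ) volume 0 x

lemma gpfKernel_nonneg (α p x τ : ℝ) (hτ : τ ≤ x) : 0 ≤ gpfKernel α p x τ := by
  unfold gpfKernel
  exact mul_nonneg (Real.exp_pos _).le (Real.rpow_nonneg (by linarith) _)

theorem gpf_polya_szego_lemma
    (α p₁ x : ℝ) (hα : 0 < α) (hp₁ : p₁ ∈ Set.Ioc (0:ℝ) 1) (hx : 0 < x)
    (f g v₁ v₂ w₁ w₂ : ℝ → ℝ)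
    (hfb : ∀ τ ∈ Set.Icc (0:ℝ) x, 0 < v₁ τ ∧ v₁ τ ≤ f τ ∧ f τ ≤ v₂ τ)
    (hgb : ∀ τ ∈ Set.Icc (0:ℝ) x, 0 < w₁ τ ∧ w₁ τ ≤ g τ ∧ g τ ≤ w₂ τ)
    (h1 : GpfIntegrable α p₁ x (fun τ => w₁ τ * w₂ τ * f τ ^ 2))
    (h2 : GpfIntegrable α p₁ x (fun τ => v₁ τ * v₂ τ * g τ ^ 2))
    (h3 : GpfIntegrable α p₁ x (fun τ => (v₁ τ * w₁ τ + v₂ τ * w₂ τ) * (f τ * g τ))) :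
    gpf α p₁ x (fun τ => w₁ τ * w₂ τ * f τ ^ 2) *
      gpf α p₁ x (fun τ => v₁ τ * v₂ τ * g τ ^ 2) ≤
    (1 / 4) * (gpf α p₁ x (fun τ => (v₁ τ * w₁ τ + v₂ τ * w₂ τ) * (f τ * g τ))) ^ 2 := by
  obtain ⟨hp0, hp1⟩ := hp₁
  set c : ℝ := 1 / (p₁ ^ α * Real.Gamma α) with hc
  have hcpos : 0 < c := by
    apply one_div_pos.mpr
    exact mul_pos (Real.rpow_pos_of_pos hp0 α) (Real.Gamma_pos_of_pos hα)
  set IA : ℝ := ∫ τ in (0:ℝ)..x, gpfKernel α p₁ x τ * (w₁ τ * w₂ τ * f τ ^ 2) with hIA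
  set IB : ℝ := ∫ τ in (0:ℝ)..x, gpfKernel α p₁ x τ * (v₁ τ * v₂ τ * g τ ^ 2) with hIB
  set IC : ℝ := ∫ τ in (0:ℝ)..x,
      gpfKernel α p₁ x τ * ((v₁ τ * w₁ τ + v₂ τ * w₂ τ) * (f τ * g τ)) with hIC
  -- pointwise inequality
  have hpt : ∀ τ ∈ Set.Icc (0:ℝ) x,
      gpfKernel α p₁ x τ * (w₁ τ * w₂ τ * f τ ^ 2)
        + gpfKernel α p₁ x τ * (v₁ τ * v₂ τ * g τ ^ 2)
      ≤ gpfKernel α p₁ x τ * ((v₁ τ * w₁ τ + v₂ τ * w₂ τ) * (f τ * g τ)) := by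
    intro τ hτ
    obtain ⟨hv1, hv1f, hfv2⟩ := hfb τ hτ
    obtain ⟨hw1, hw1g, hgw2⟩ := hgb τ hτ
    have hk := gpfKernel_nonneg α p₁ x τ hτ.2
    have hfpos : 0 < f τ := lt_of_lt_of_le hv1 hv1f
    have hgpos : 0 < g τ := lt_of_lt_of_le hw1 hw1g
    have h1 : 0 ≤ w₂ τ * f τ - v₁ τ * g τ := by nlinarith
    have h2 : 0 ≤ v₂ τ * g τ - w₁ τ * f τ := by nlinarith
    have key : w₁ τ * w₂ τ * f τ ^ 2 + v₁ τ * v₂ τ * g τ ^ 2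
        ≤ (v₁ τ * w₁ τ + v₂ τ * w₂ τ) * (f τ * g τ) := by nlinarith [mul_nonneg h1 h2]
    nlinarith [mul_le_mul_of_nonneg_left key hk]
  have hAnn : 0 ≤ IA := by
    apply intervalIntegral.integral_nonneg hx.le
    intro τ hτ
    obtain ⟨hv1, hv1f, _⟩ := hfb τ hτ
    obtain ⟨hw1, hw1g, hgw2⟩ := hgb τ hτ
    exact mul_nonneg (gpfKernel_nonneg α p₁ x τ hτ.2)
      (mul_nonneg (mul_nonneg hw1.le (by linarith)) (sq_nonneg _))
  have hBnn : 0 ≤ IB := by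
    apply intervalIntegral.integral_nonneg hx.le
    intro τ hτ
    obtain ⟨hv1, _, hfv2⟩ := hfb τ hτ
    exact mul_nonneg (gpfKernel_nonneg α p₁ x τ hτ.2)
      (mul_nonneg (by nlinarith) (sq_nonneg _))
  have hsum : IA + IB ≤ IC := by
    rw [hIA, hIB, hIC, ← intervalIntegral.integral_add h1 h2]
    exact intervalIntegral.integral_mono_on hx.le (h1.add h2) h3 hpt
  have hgA : gpf α p₁ x (fun τ => w₁ τ * w₂ τ * f τ ^ 2) = c * IA := rfl
  have hgB : gpf α p₁ x (fun τ => v₁ τ * v₂ τ * g τ ^ 2) = c * IB := rfl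
  have hgC : gpf α p₁ x (fun τ => (v₁ τ * w₁ τ + v₂ τ * w₂ τ) * (f τ * g τ)) = c * IC := rfl
  rw [hgA, hgB, hgC]
  have hICnn : 0 ≤ IC := le_trans (by linarith) hsum
  have h4 : IA * IB ≤ (1/4) * IC ^ 2 := by
    nlinarith [sq_nonneg (IA - IB), mul_le_mul hsum hsum (by linarith) hICnn]
  nlinarith [mul_le_mul_of_nonneg_left h4 (mul_pos hcpos hcpos).le]
end

section
/- Let α > 0, p₁ ∈ (0,1], x > 0, and f, g positive integrable functions on [0,x] with constants 0 < m ≤ f ≤ M and 0 < n ≤ g ≤ N on [0,x]. Then (I^{α,p₁}[f²](x)) (I^{α,p₁}[g²](x)) ≤ (1/4)(√(mn/(MN)) + √(MN/(mn)))² (I^{α,p₁}[fg](x))², where I^{α,p₁} is the generalized proportional fractional integral. -/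
open MeasureTheory

theorem gpf_polya_szego_const
    (α p₁ x m M n N : ℝ) (hα : 0 < α) (hp₁ : p₁ ∈ Set.Ioc (0:ℝ) 1) (hx : 0 < x)
    (f g : ℝ → ℝ) (hm : 0 < m) (hn : 0 < n)
    (hfb : ∀ τ ∈ Set.Icc (0:ℝ) x, m ≤ f τ ∧ f τ ≤ M)
    (hgb : ∀ τ ∈ Set.Icc (0:ℝ) x, n ≤ g τ ∧ g τ ≤ N)
    (h1 : GpfIntegrable α p₁ x (fun τ => f τ ^ 2))
    (h2 : GpfIntegrable α p₁ x (fun τ => g τ ^ 2))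
    (h3 : GpfIntegrable α p₁ x (fun τ => f τ * g τ)) :
    gpf α p₁ x (fun τ => f τ ^ 2) * gpf α p₁ x (fun τ => g τ ^ 2) ≤
      (1 / 4) * (Real.sqrt (m * n / (M * N)) + Real.sqrt (M * N / (m * n))) ^ 2 *
        (gpf α p₁ x (fun τ => f τ * g τ)) ^ 2 := by
  obtain ⟨hp, hp1⟩ := hp₁
  have h0x : (0:ℝ) ∈ Set.Icc (0:ℝ) x := ⟨le_refl 0, hx.le⟩
  have hM : 0 < M := lt_of_lt_of_le hm (le_trans (hfb 0 h0x).1 (hfb 0 h0x).2)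
  have hN : 0 < N := lt_of_lt_of_le hn (le_trans (hgb 0 h0x).1 (hgb 0 h0x).2)
  have hKnn : ∀ τ ∈ Set.Icc (0:ℝ) x, 0 ≤ gpfKernel α p₁ x τ := fun τ hτ =>
    mul_nonneg (Real.exp_pos _).le (Real.rpow_nonneg (sub_nonneg.2 hτ.2) _)
  -- pointwise inequality
  have hpt : ∀ τ ∈ Set.Icc (0:ℝ) x,
      n * N * (gpfKernel α p₁ x τ * f τ ^ 2) + m * M * (gpfKernel α p₁ x τ * g τ ^ 2) ≤
        (m * n + M * N) * (gpfKernel α p₁ x τ * (f τ * g τ)) := by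
    intro τ hτ
    have hf := hfb τ hτ
    have hg := hgb τ hτ
    have hKτ := hKnn τ hτ
    have hprod : 0 ≤ (N * f τ - m * g τ) * (M * g τ - n * f τ) := by
      apply mul_nonneg <;> nlinarith [hf.1, hf.2, hg.1, hg.2]
    have pt : n * N * f τ ^ 2 + m * M * g τ ^ 2 ≤ (m * n + M * N) * (f τ * g τ) := by
      nlinarith [hprod]
    nlinarith [mul_le_mul_of_nonneg_left pt hKτ]
  have hi1 := h1.const_mul (n * N)
  have hi2 := h2.const_mul (m * M)
  have hi3 := h3.const_mul (m * n + M * N)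
  have hint : (∫ τ in (0:ℝ)..x, (n * N * (gpfKernel α p₁ x τ * f τ ^ 2) +
        m * M * (gpfKernel α p₁ x τ * g τ ^ 2))) ≤
      ∫ τ in (0:ℝ)..x, (m * n + M * N) * (gpfKernel α p₁ x τ * (f τ * g τ)) :=
    intervalIntegral.integral_mono_on hx.le (hi1.add hi2) hi3 hpt
  beta_reduce at hint
  set A := ∫ τ in (0:ℝ)..x, gpfKernel α p₁ x τ * f τ ^ 2 with hA
  set B := ∫ τ in (0:ℝ)..x, gpfKernel α p₁ x τ * g τ ^ 2 with hB
  set C := ∫ τ in (0:ℝ)..x, gpfKernel α p₁ x τ * (f τ * g τ) with hC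
  rw [intervalIntegral.integral_add hi1 hi2, intervalIntegral.integral_const_mul,
    intervalIntegral.integral_const_mul, intervalIntegral.integral_const_mul] at hint
  have hAnn : 0 ≤ A := intervalIntegral.integral_nonneg hx.le
    (fun τ hτ => mul_nonneg (hKnn τ hτ) (sq_nonneg _))
  have hBnn : 0 ≤ B := intervalIntegral.integral_nonneg hx.le
    (fun τ hτ => mul_nonneg (hKnn τ hτ) (sq_nonneg _))
  have hsum : 0 ≤ n * N * A + m * M * B := by positivity
  have hCnn : 0 ≤ C := by
    nlinarith [le_trans hsum hint, show (0:ℝ) < m * n + M * N by positivity]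
  have key2 : 4 * (m * n * (M * N)) * (A * B) ≤ (m * n + M * N) ^ 2 * C ^ 2 := by
    nlinarith [sq_nonneg (n * N * A - m * M * B), mul_self_le_mul_self hsum hint]
  set u := Real.sqrt (m * n / (M * N)) with hu'
  set v := Real.sqrt (M * N / (m * n)) with hv'
  have hu : u ^ 2 = m * n / (M * N) := Real.sq_sqrt (by positivity)
  have hv : v ^ 2 = M * N / (m * n) := Real.sq_sqrt (by positivity)
  have huv : u * v = 1 := by
    rw [hu', hv', ← Real.sqrt_mul (by positivity),
      show m * n / (M * N) * (M * N / (m * n)) = 1 by field_simp]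
    exact Real.sqrt_one
  have hcoef : (u + v) ^ 2 = (m * n + M * N) ^ 2 / (m * n * (M * N)) := by
    have h : (u + v) ^ 2 = u ^ 2 + 2 * (u * v) + v ^ 2 := by ring
    rw [h, hu, hv, huv]
    field_simp
    ring
  have hc : 0 < 1 / (p₁ ^ α * Real.Gamma α) := by
    have := Real.Gamma_pos_of_pos hα
    have := Real.rpow_pos_of_pos hp α
    positivity
  set c := 1 / (p₁ ^ α * Real.Gamma α) with hc'
  have eA : gpf α p₁ x (fun τ => f τ ^ 2) = c * A := rfl
  have eB : gpf α p₁ x (fun τ => g τ ^ 2) = c * B := rfl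
  have eC : gpf α p₁ x (fun τ => f τ * g τ) = c * C := rfl
  rw [eA, eB, eC, hcoef]
  have step : A * B ≤ (m * n + M * N) ^ 2 * C ^ 2 / (4 * (m * n * (M * N))) := by
    rw [le_div_iff₀ (by positivity)]
    linarith [key2]
  have step2 := mul_le_mul_of_nonneg_left step (sq_nonneg c)
  calc c * A * (c * B) = c ^ 2 * (A * B) := by ring
    _ ≤ c ^ 2 * ((m * n + M * N) ^ 2 * C ^ 2 / (4 * (m * n * (M * N)))) := step2
    _ = 1 / 4 * ((m * n + M * N) ^ 2 / (m * n * (M * N))) * (c * C) ^ 2 := by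
        field_simp
end

section
/- Let α > 0, p ∈ (0,1], x > 0, and f, g positive integrable functions on [0,x] with 0 < m ≤ f ≤ M and 0 < n ≤ g ≤ N on [0,x]. Then I^{α,p}[f²](x) · I^{α,p}[g²](x) ≤ (MN/(mn)) · (I^{α,p}[fg](x))². -/
open MeasureTheory

theorem gpf_product_bound_const
    (α p x m M n N : ℝ) (hα : 0 < α) (hp : p ∈ Set.Ioc (0:ℝ) 1) (hx : 0 < x)
    (f g : ℝ → ℝ) (hm : 0 < m) (hn : 0 < n)
    (hfb : ∀ τ ∈ Set.Icc (0:ℝ) x, m ≤ f τ ∧ f τ ≤ M)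
    (hgb : ∀ τ ∈ Set.Icc (0:ℝ) x, n ≤ g τ ∧ g τ ≤ N)
    (hfpos : ∀ τ ∈ Set.Icc (0:ℝ) x, 0 < f τ)
    (hgpos : ∀ τ ∈ Set.Icc (0:ℝ) x, 0 < g τ)
    (h1 : GpfIntegrable α p x (fun τ => f τ ^ 2))
    (h2 : GpfIntegrable α p x (fun τ => g τ ^ 2))
    (h3 : GpfIntegrable α p x (fun τ => f τ * g τ)) :
    gpf α p x (fun τ => f τ ^ 2) * gpf α p x (fun τ => g τ ^ 2) ≤
      (M * N / (m * n)) * (gpf α p x (fun τ => f τ * g τ)) ^ 2 := by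
  obtain ⟨hp0, hp1⟩ := hp
  have hΓ : 0 < Real.Gamma α := Real.Gamma_pos_of_pos hα
  have hc : 0 < 1 / (p ^ α * Real.Gamma α) := by positivity
  set c := 1 / (p ^ α * Real.Gamma α) with hcdef
  have hker : ∀ τ ∈ Set.Icc (0:ℝ) x, 0 ≤ gpfKernel α p x τ := by
    intro τ hτ
    have hxτ : (0:ℝ) ≤ x - τ := by linarith [hτ.2]
    exact mul_nonneg (Real.exp_pos _).le (Real.rpow_nonneg hxτ _)
  have hM : 0 < M := lt_of_lt_of_le hm
    (le_trans (hfb 0 ⟨le_rfl, hx.le⟩).1 (hfb 0 ⟨le_rfl, hx.le⟩).2)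
  have hN : 0 < N := lt_of_lt_of_le hn
    (le_trans (hgb 0 ⟨le_rfl, hx.le⟩).1 (hgb 0 ⟨le_rfl, hx.le⟩).2)
  set I1 := ∫ τ in (0:ℝ)..x, gpfKernel α p x τ * f τ ^ 2 with hI1def
  set I2 := ∫ τ in (0:ℝ)..x, gpfKernel α p x τ * g τ ^ 2 with hI2def
  set I3 := ∫ τ in (0:ℝ)..x, gpfKernel α p x τ * (f τ * g τ) with hI3def
  have hI3nn : 0 ≤ I3 :=
    intervalIntegral.integral_nonneg hx.le (fun τ hτ =>
      mul_nonneg (hker τ hτ) (mul_nonneg (hfpos τ hτ).le (hgpos τ hτ).le))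
  have hI2nn : 0 ≤ I2 :=
    intervalIntegral.integral_nonneg hx.le (fun τ hτ =>
      mul_nonneg (hker τ hτ) (sq_nonneg _))
  have hI1le : I1 ≤ (M / n) * I3 := by
    rw [hI1def, hI3def, ← intervalIntegral.integral_const_mul]
    apply intervalIntegral.integral_mono_on hx.le h1 (h3.const_mul (M / n))
    intro τ hτ
    have hk := hker τ hτ
    have hf1 := (hfb τ hτ).1
    have hf2 := (hfb τ hτ).2
    have hg1 := (hgb τ hτ).1
    have hfp := hfpos τ hτ
    have h' : f τ * n ≤ M * g τ := by nlinarith [mul_le_mul_of_nonneg_right hf2 hn.le, mul_le_mul_of_nonneg_left hg1 hM.le]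
    have key : f τ ^ 2 * n ≤ M * (f τ * g τ) := by nlinarith [mul_le_mul_of_nonneg_left h' hfp.le]
    have hmono := mul_le_mul_of_nonneg_left key hk
    rw [div_mul_eq_mul_div, le_div_iff₀ hn]
    show gpfKernel α p x τ * f τ ^ 2 * n ≤ M * (gpfKernel α p x τ * (f τ * g τ))
    nlinarith [hmono]
  have hI2le : I2 ≤ (N / m) * I3 := by
    rw [hI2def, hI3def, ← intervalIntegral.integral_const_mul]
    apply intervalIntegral.integral_mono_on hx.le h2 (h3.const_mul (N / m))
    intro τ hτ
    have hk := hker τ hτ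
    have hg1 := (hgb τ hτ).1
    have hg2 := (hgb τ hτ).2
    have hf1 := (hfb τ hτ).1
    have hgp := hgpos τ hτ
    have h' : g τ * m ≤ N * f τ := by nlinarith [mul_le_mul_of_nonneg_right hg2 hm.le, mul_le_mul_of_nonneg_left hf1 hN.le]
    have key : g τ ^ 2 * m ≤ N * (f τ * g τ) := by nlinarith [mul_le_mul_of_nonneg_left h' hgp.le]
    have hmono := mul_le_mul_of_nonneg_left key hk
    rw [div_mul_eq_mul_div, le_div_iff₀ hm]
    show gpfKernel α p x τ * g τ ^ 2 * m ≤ N * (gpfKernel α p x τ * (f τ * g τ))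
    nlinarith [hmono]
  have hmul : I1 * I2 ≤ ((M / n) * I3) * ((N / m) * I3) :=
    mul_le_mul hI1le hI2le hI2nn (mul_nonneg (by positivity) hI3nn)
  show c * I1 * (c * I2) ≤ M * N / (m * n) * (c * I3) ^ 2
  have hc2 : (0:ℝ) ≤ c ^ 2 := sq_nonneg c
  calc c * I1 * (c * I2) = c ^ 2 * (I1 * I2) := by ring
    _ ≤ c ^ 2 * (((M / n) * I3) * ((N / m) * I3)) := mul_le_mul_of_nonneg_left hmul hc2
    _ = M * N / (m * n) * (c * I3) ^ 2 := by field_simp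
end

section
/- Let α, β > 0, p₁, p₂ ∈ (0,1], x > 0, and let f, g be positive integrable functions on [0,x] bounded as 0 < v₁ ≤ f ≤ v₂ and 0 < w₁ ≤ g ≤ w₂ by positive integrable functions. Then I^{α,p₁}[1](x)·I^{β,p₂}[fg](x) + I^{β,p₂}[1](x)·I^{α,p₁}[fg](x) - I^{α,p₁}[f](x)·I^{β,p₂}[g](x) - I^{β,p₂}[f](x)·I^{α,p₁}[g](x) ≤ |A₁(f,v₁,v₂)(x) + A₂(f,v₁,v₂)(x)|^{1/2} · |A₁(g,w₁,w₂)(x) + A₂(g,w₁,w₂)(x)|^{1/2}, where A₁(u,v,w)(x) = I^{β,p₂}[1](x) · (I^{α,p₁}[(v+w)u](x))² / (4 I^{α,p₁}[vw](x)) - I^{α,p₁}[u](x)·I^{β,p₂}[u](x) and A₂(u,v,w)(x) = I^{α,p₁}[1](x) · (I^{β,p₂}[(v+w)u](x))² / (4 I^{β,p₂}[vw](x)) - I^{α,p₁}[u](x)·I^{β,p₂}[u](x). -/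
open MeasureTheory

/-!
For finite measures `μ, ν` the functional
`T(f, g) = μ(1) ν(fg) + ν(1) μ(fg) - μ(f) ν(g) - ν(f) μ(g)` is the integral of
`(f τ - f ξ) (g τ - g ξ)` over `μ ⊗ ν`, so Cauchy–Schwarz on the product space gives
`T(f, g) ≤ T(f, f)^{1/2} T(g, g)^{1/2}`. Integrating `(f - v) (w - f) ≥ 0` gives
`μ(f²) + μ(vw) ≤ μ((v + w) f)`, and AM-GM turns this into `μ(f²) ≤ μ((v + w) f)² / (4 μ(vw))`,
which bounds `T(f, f)` by `A₁ + A₂`. The GPF integral `I^{α,p}[·](x)` is integration against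
the finite measure on `(0, x]` with density `e^{((p-1)/p)(x-τ)} (x-τ)^{α-1} / (p^α Γ(α))`.
-/

open Set NNReal

namespace MeasureTheory

variable {Ω : Type*} [MeasurableSpace Ω] (μ ν : Measure Ω)

theorem integral_mul_le_rpow_mul_rpow {F G : Ω → ℝ} (hF : MemLp F 2 μ) (hG : MemLp G 2 μ) :
    ∫ ω, F ω * G ω ∂μ ≤ (∫ ω, F ω ^ 2 ∂μ) ^ (1 / 2 : ℝ) * (∫ ω, G ω ^ 2 ∂μ) ^ (1 / 2 : ℝ) := by
  have hölder := integral_mul_norm_le_Lp_mul_Lq (μ := μ) Real.HolderConjugate.two_two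
    (by simpa using hF) (by simpa using hG)
  simp only [Real.norm_eq_abs, Real.rpow_two, sq_abs, ← abs_mul] at hölder
  exact (le_abs_self _).trans (abs_integral_le_integral_abs.trans hölder)

theorem integral_sq_le_of_bounds {f v w : Ω → ℝ}
    (hf : ∀ᵐ ω ∂μ, 0 < v ω ∧ v ω ≤ f ω ∧ f ω ≤ w ω)
    (hf2 : Integrable (fun ω => f ω ^ 2) μ) (hsum : Integrable (fun ω => (v ω + w ω) * f ω) μ)
    (hprod : Integrable (fun ω => v ω * w ω) μ) :
    ∫ ω, f ω ^ 2 ∂μ ≤ (∫ ω, (v ω + w ω) * f ω ∂μ) ^ 2 / (4 * ∫ ω, v ω * w ω ∂μ) := by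
  have hvw : ∀ᵐ ω ∂μ, 0 < v ω * w ω := hf.mono fun ω ⟨hv, hvf, hfw⟩ =>
    mul_pos hv (hv.trans_le (hvf.trans hfw))
  rcases (integral_nonneg_of_ae (hvw.mono fun _ h => h.le)).eq_or_lt with h0 | hpos
  · -- `∫ v w = 0` forces `μ = 0`, where both sides vanish
    have hzero := (integral_eq_zero_iff_of_nonneg_ae (hvw.mono fun _ h => h.le) hprod).1 h0.symm
    have hμ : μ = 0 := by
      rw [← ae_eq_bot, ← Filter.eventually_false_iff_eq_bot]
      exact (hvw.and hzero).mono fun _ h => h.1.ne' h.2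
    simp [hμ]
  · have hsum_le : ∫ ω, f ω ^ 2 ∂μ + ∫ ω, v ω * w ω ∂μ ≤ ∫ ω, (v ω + w ω) * f ω ∂μ := by
      rw [← integral_add hf2 hprod]
      refine integral_mono_ae (hf2.add hprod) hsum (hf.mono fun ω ⟨_, hvf, hfw⟩ => ?_)
      nlinarith [mul_nonneg (sub_nonneg.2 hvf) (sub_nonneg.2 hfw)]
    have hf2_nonneg : 0 ≤ ∫ ω, f ω ^ 2 ∂μ := integral_nonneg fun ω => sq_nonneg _
    rw [le_div_iff₀ (by positivity)]
    nlinarith [sq_nonneg (∫ ω, f ω ^ 2 ∂μ - ∫ ω, v ω * w ω ∂μ)]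

noncomputable def chebyshevFunctional (f g : Ω → ℝ) : ℝ :=
  μ.real univ * ∫ ω, f ω * g ω ∂ν + ν.real univ * ∫ ω, f ω * g ω ∂μ
    - (∫ ω, f ω ∂μ) * (∫ ω, g ω ∂ν) - (∫ ω, f ω ∂ν) * (∫ ω, g ω ∂μ)

theorem chebyshevFunctional_self_le {f : Ω → ℝ} {a b : ℝ} (ha : ∫ ω, f ω ^ 2 ∂μ ≤ a)
    (hb : ∫ ω, f ω ^ 2 ∂ν ≤ b) :
    chebyshevFunctional μ ν f f ≤
      (ν.real univ * a - (∫ ω, f ω ∂μ) * ∫ ω, f ω ∂ν) +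
        (μ.real univ * b - (∫ ω, f ω ∂μ) * ∫ ω, f ω ∂ν) := by
  simp only [chebyshevFunctional, ← sq]
  nlinarith [mul_le_mul_of_nonneg_left ha (measureReal_nonneg (μ := ν) (s := univ)),
    mul_le_mul_of_nonneg_left hb (measureReal_nonneg (μ := μ) (s := univ))]

section Finite

variable [IsFiniteMeasure μ] [IsFiniteMeasure ν] {f g : Ω → ℝ}

theorem chebyshevFunctional_eq_integral_prod (hfμ : MemLp f 2 μ) (hfν : MemLp f 2 ν)
    (hgμ : MemLp g 2 μ) (hgν : MemLp g 2 ν) :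
    chebyshevFunctional μ ν f g = ∫ z, (f z.1 - f z.2) * (g z.1 - g z.2) ∂μ.prod ν := by
  have i₁ : Integrable (fun z : Ω × Ω => f z.1 * g z.1 * 1) (μ.prod ν) :=
    (hfμ.integrable_mul hgμ).mul_prod (integrable_const 1)
  have i₂ : Integrable (fun z : Ω × Ω => f z.1 * g z.2) (μ.prod ν) :=
    (hfμ.integrable one_le_two).mul_prod (hgν.integrable one_le_two)
  have i₃ : Integrable (fun z : Ω × Ω => g z.1 * f z.2) (μ.prod ν) :=
    (hgμ.integrable one_le_two).mul_prod (hfν.integrable one_le_two)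
  have i₄ : Integrable (fun z : Ω × Ω => 1 * (f z.2 * g z.2)) (μ.prod ν) :=
    (integrable_const 1).mul_prod (hfν.integrable_mul hgν)
  have expand : (fun z : Ω × Ω => (f z.1 - f z.2) * (g z.1 - g z.2)) = fun z =>
      f z.1 * g z.1 * 1 - f z.1 * g z.2 - g z.1 * f z.2 + 1 * (f z.2 * g z.2) := by
    ext z; ring
  rw [expand, integral_add ?_ i₄, integral_sub ?_ i₃, integral_sub i₁ i₂,
    integral_prod_mul (fun ω => f ω * g ω) (fun _ => (1 : ℝ)), integral_prod_mul f g,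
    integral_prod_mul g f, integral_prod_mul (fun _ => (1 : ℝ)) (fun ω => f ω * g ω)]
  · simp only [integral_const, smul_eq_mul, mul_one, chebyshevFunctional]
    ring
  · exact i₁.sub i₂
  · exact (i₁.sub i₂).sub i₃

theorem chebyshevFunctional_self_nonneg (hfμ : MemLp f 2 μ) (hfν : MemLp f 2 ν) :
    0 ≤ chebyshevFunctional μ ν f f := by
  rw [chebyshevFunctional_eq_integral_prod μ ν hfμ hfν hfμ hfν]
  exact integral_nonneg fun z => mul_self_nonneg _

theorem chebyshevFunctional_le_rpow_mul_rpow (hfμ : MemLp f 2 μ) (hfν : MemLp f 2 ν)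
    (hgμ : MemLp g 2 μ) (hgν : MemLp g 2 ν) :
    chebyshevFunctional μ ν f g ≤
      chebyshevFunctional μ ν f f ^ (1 / 2 : ℝ) * chebyshevFunctional μ ν g g ^ (1 / 2 : ℝ) := by
  have hF : MemLp (fun z : Ω × Ω => f z.1 - f z.2) 2 (μ.prod ν) :=
    (hfμ.comp_fst ν).sub (hfν.comp_snd μ)
  have hG : MemLp (fun z : Ω × Ω => g z.1 - g z.2) 2 (μ.prod ν) :=
    (hgμ.comp_fst ν).sub (hgν.comp_snd μ)
  rw [chebyshevFunctional_eq_integral_prod μ ν hfμ hfν hgμ hgν,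
    chebyshevFunctional_eq_integral_prod μ ν hfμ hfν hfμ hfν,
    chebyshevFunctional_eq_integral_prod μ ν hgμ hgν hgμ hgν]
  simp only [← sq]
  exact integral_mul_le_rpow_mul_rpow _ hF hG

end Finite

end MeasureTheory

section GPF

variable {α β p p₁ p₂ x : ℝ}

noncomputable def gpfDensity (α p x τ : ℝ) : ℝ≥0 :=
  (gpfKernel α p x τ / (p ^ α * Real.Gamma α)).toNNReal

noncomputable def gpfMeasure (α p x : ℝ) : Measure ℝ :=
  (volume.restrict (Ioc 0 x)).withDensity fun τ => gpfDensity α p x τ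

theorem measurable_gpfDensity : Measurable (gpfDensity α p x) := by
  unfold gpfDensity gpfKernel
  fun_prop

theorem gpfDensity_smul (hα : 0 ≤ α) (hp : 0 ≤ p) {τ : ℝ} (hτ : τ ≤ x) (y : ℝ) :
    gpfDensity α p x τ • y = 1 / (p ^ α * Real.Gamma α) * (gpfKernel α p x τ * y) := by
  have hK : 0 ≤ gpfKernel α p x τ :=
    mul_nonneg (Real.exp_pos _).le (Real.rpow_nonneg (sub_nonneg.2 hτ) _)
  have hc : 0 ≤ p ^ α * Real.Gamma α :=
    mul_nonneg (Real.rpow_nonneg hp _) (Real.Gamma_nonneg_of_nonneg hα)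
  rw [NNReal.smul_def, smul_eq_mul, gpfDensity, Real.coe_toNNReal _ (div_nonneg hK hc)]
  ring

theorem gpf_eq_integral (hα : 0 ≤ α) (hp : 0 ≤ p) (hx : 0 ≤ x) (h : ℝ → ℝ) :
    gpf α p x h = ∫ τ, h τ ∂gpfMeasure α p x := by
  rw [gpfMeasure, integral_withDensity_eq_integral_smul measurable_gpfDensity, gpf,
    intervalIntegral.integral_of_le hx, ← integral_const_mul]
  exact setIntegral_congr_fun measurableSet_Ioc fun τ hτ =>
    (gpfDensity_smul hα hp hτ.2 _).symm

theorem GpfIntegrable.integrable (hα : 0 ≤ α) (hp : 0 ≤ p) (hx : 0 ≤ x) {h : ℝ → ℝ}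
    (hh : GpfIntegrable α p x h) : Integrable h (gpfMeasure α p x) := by
  rw [gpfMeasure, integrable_withDensity_iff_integrable_smul measurable_gpfDensity]
  have := ((intervalIntegrable_iff_integrableOn_Ioc_of_le hx).1 hh).const_mul
    (1 / (p ^ α * Real.Gamma α))
  exact this.congr (ae_restrict_of_forall_mem measurableSet_Ioc fun τ hτ =>
    (gpfDensity_smul hα hp hτ.2 _).symm)

theorem GpfIntegrable.memLp_two (hα : 0 ≤ α) (hp : 0 ≤ p) (hx : 0 ≤ x) {h : ℝ → ℝ}
    (hh : GpfIntegrable α p x h) (hh2 : GpfIntegrable α p x fun τ => h τ ^ 2) :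
    MemLp h 2 (gpfMeasure α p x) :=
  (memLp_two_iff_integrable_sq (hh.integrable hα hp hx).1).2 (hh2.integrable hα hp hx)

theorem gpfIntegrable_one (hα : 0 < α) : GpfIntegrable α p x fun _ => 1 := by
  have hpow : IntervalIntegrable (fun τ => (x - τ) ^ (α - 1)) volume 0 x := by
    simpa using (intervalIntegral.intervalIntegrable_rpow' (r := α - 1) (a := x) (b := 0)
      (by linarith)).comp_sub_left x
  simpa [GpfIntegrable, gpfKernel] using hpow.continuousOn_mul (by fun_prop)

theorem isFiniteMeasure_gpfMeasure (hα : 0 < α) (hp : 0 ≤ p) (hx : 0 ≤ x) :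
    IsFiniteMeasure (gpfMeasure α p x) :=
  (integrable_const_iff.1 ((gpfIntegrable_one hα).integrable hα.le hp hx)).resolve_left
    one_ne_zero

theorem ae_gpfMeasure {P : ℝ → Prop} (hP : ∀ τ ∈ Ioc 0 x, P τ) :
    ∀ᵐ τ ∂gpfMeasure α p x, P τ :=
  (withDensity_absolutelyContinuous _ _).ae_le (ae_restrict_of_forall_mem measurableSet_Ioc hP)

theorem chebyshevFunctional_gpfMeasure_self_le (hα : 0 ≤ α) (hβ : 0 ≤ β) (hp₁ : 0 ≤ p₁)
    (hp₂ : 0 ≤ p₂) (hx : 0 ≤ x) {u v w : ℝ → ℝ}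
    (hu : ∀ τ ∈ Ioc 0 x, 0 < v τ ∧ v τ ≤ u τ ∧ u τ ≤ w τ)
    (hu2α : GpfIntegrable α p₁ x fun τ => u τ ^ 2)
    (hu2β : GpfIntegrable β p₂ x fun τ => u τ ^ 2)
    (hsumα : GpfIntegrable α p₁ x fun τ => (v τ + w τ) * u τ)
    (hsumβ : GpfIntegrable β p₂ x fun τ => (v τ + w τ) * u τ)
    (hprodα : GpfIntegrable α p₁ x fun τ => v τ * w τ)
    (hprodβ : GpfIntegrable β p₂ x fun τ => v τ * w τ) :
    chebyshevFunctional (gpfMeasure α p₁ x) (gpfMeasure β p₂ x) u u ≤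
      (gpf β p₂ x (fun _ => 1) * (gpf α p₁ x fun τ => (v τ + w τ) * u τ) ^ 2 /
          (4 * gpf α p₁ x fun τ => v τ * w τ) - gpf α p₁ x u * gpf β p₂ x u) +
        (gpf α p₁ x (fun _ => 1) * (gpf β p₂ x fun τ => (v τ + w τ) * u τ) ^ 2 /
          (4 * gpf β p₂ x fun τ => v τ * w τ) - gpf α p₁ x u * gpf β p₂ x u) := by
  simp only [gpf_eq_integral hα hp₁ hx, gpf_eq_integral hβ hp₂ hx, integral_const,
    smul_eq_mul, mul_one, mul_div_assoc]
  exact chebyshevFunctional_self_le _ _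
    (integral_sq_le_of_bounds _ (ae_gpfMeasure hu) (hu2α.integrable hα hp₁ hx)
      (hsumα.integrable hα hp₁ hx) (hprodα.integrable hα hp₁ hx))
    (integral_sq_le_of_bounds _ (ae_gpfMeasure hu) (hu2β.integrable hβ hp₂ hx)
      (hsumβ.integrable hβ hp₂ hx) (hprodβ.integrable hβ hp₂ hx))

end GPF

theorem gpf_chebyshev_two_param_general
    (α β p₁ p₂ x : ℝ) (hα : 0 < α) (hβ : 0 < β)
    (hp₁ : p₁ ∈ Set.Ioc (0:ℝ) 1) (hp₂ : p₂ ∈ Set.Ioc (0:ℝ) 1) (hx : 0 < x)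
    (f g v₁ v₂ w₁ w₂ : ℝ → ℝ)
    (hfb : ∀ τ ∈ Set.Icc (0:ℝ) x, 0 < v₁ τ ∧ v₁ τ ≤ f τ ∧ f τ ≤ v₂ τ)
    (hgb : ∀ τ ∈ Set.Icc (0:ℝ) x, 0 < w₁ τ ∧ w₁ τ ≤ g τ ∧ g τ ≤ w₂ τ)
    (hint3 : GpfIntegrable α p₁ x f) (hint4 : GpfIntegrable β p₂ x f)
    (hint5 : GpfIntegrable α p₁ x g) (hint6 : GpfIntegrable β p₂ x g)
    (hint9 : GpfIntegrable α p₁ x (fun τ => f τ ^ 2))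
    (hint10 : GpfIntegrable β p₂ x (fun τ => f τ ^ 2))
    (hint11 : GpfIntegrable α p₁ x (fun τ => g τ ^ 2))
    (hint12 : GpfIntegrable β p₂ x (fun τ => g τ ^ 2))
    (hint13 : GpfIntegrable α p₁ x (fun τ => (v₁ τ + v₂ τ) * f τ))
    (hint14 : GpfIntegrable β p₂ x (fun τ => (v₁ τ + v₂ τ) * f τ))
    (hint15 : GpfIntegrable α p₁ x (fun τ => v₁ τ * v₂ τ))
    (hint16 : GpfIntegrable β p₂ x (fun τ => v₁ τ * v₂ τ))
    (hint17 : GpfIntegrable α p₁ x (fun τ => (w₁ τ + w₂ τ) * g τ))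
    (hint18 : GpfIntegrable β p₂ x (fun τ => (w₁ τ + w₂ τ) * g τ))
    (hint19 : GpfIntegrable α p₁ x (fun τ => w₁ τ * w₂ τ))
    (hint20 : GpfIntegrable β p₂ x (fun τ => w₁ τ * w₂ τ))
    (A₁ : (ℝ → ℝ) → (ℝ → ℝ) → (ℝ → ℝ) → ℝ)
    (A₂ : (ℝ → ℝ) → (ℝ → ℝ) → (ℝ → ℝ) → ℝ)
    (hA₁ : ∀ u v w, A₁ u v w =
      gpf β p₂ x (fun _ => 1) *
          (gpf α p₁ x (fun τ => (v τ + w τ) * u τ)) ^ 2 /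
          (4 * gpf α p₁ x (fun τ => v τ * w τ)) -
        gpf α p₁ x u * gpf β p₂ x u)
    (hA₂ : ∀ u v w, A₂ u v w =
      gpf α p₁ x (fun _ => 1) *
          (gpf β p₂ x (fun τ => (v τ + w τ) * u τ)) ^ 2 /
          (4 * gpf β p₂ x (fun τ => v τ * w τ)) -
        gpf α p₁ x u * gpf β p₂ x u) :
    gpf α p₁ x (fun _ => 1) * gpf β p₂ x (fun τ => f τ * g τ) +
        gpf β p₂ x (fun _ => 1) * gpf α p₁ x (fun τ => f τ * g τ) -
        gpf α p₁ x f * gpf β p₂ x g - gpf β p₂ x f * gpf α p₁ x g ≤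
      |A₁ f v₁ v₂ + A₂ f v₁ v₂| ^ ((1:ℝ)/2) * |A₁ g w₁ w₂ + A₂ g w₁ w₂| ^ ((1:ℝ)/2) := by
  obtain ⟨hp₁, -⟩ := hp₁
  obtain ⟨hp₂, -⟩ := hp₂
  have := isFiniteMeasure_gpfMeasure (p := p₁) (x := x) hα hp₁.le hx.le
  have := isFiniteMeasure_gpfMeasure (p := p₂) (x := x) hβ hp₂.le hx.le
  have hfμ := hint3.memLp_two hα.le hp₁.le hx.le hint9
  have hfν := hint4.memLp_two hβ.le hp₂.le hx.le hint10
  have hgμ := hint5.memLp_two hα.le hp₁.le hx.le hint11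
  have hgν := hint6.memLp_two hβ.le hp₂.le hx.le hint12
  have hTf := chebyshevFunctional_gpfMeasure_self_le hα.le hβ.le hp₁.le hp₂.le hx.le
    (fun τ hτ => hfb τ (Ioc_subset_Icc_self hτ)) hint9 hint10 hint13 hint14 hint15 hint16
  have hTg := chebyshevFunctional_gpfMeasure_self_le hα.le hβ.le hp₁.le hp₂.le hx.le
    (fun τ hτ => hgb τ (Ioc_subset_Icc_self hτ)) hint11 hint12 hint17 hint18 hint19 hint20
  rw [← hA₁, ← hA₂] at hTf hTg
  calc _ = chebyshevFunctional (gpfMeasure α p₁ x) (gpfMeasure β p₂ x) f g := by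
        simp only [chebyshevFunctional, gpf_eq_integral hα.le hp₁.le hx.le,
          gpf_eq_integral hβ.le hp₂.le hx.le, integral_const, smul_eq_mul, mul_one]
    _ ≤ _ := chebyshevFunctional_le_rpow_mul_rpow _ _ hfμ hfν hgμ hgν
    _ ≤ _ := by
        have hff := chebyshevFunctional_self_nonneg _ _ hfμ hfν
        have hgg := chebyshevFunctional_self_nonneg _ _ hgμ hgν
        gcongr
        exacts [hTf.trans (le_abs_self _), hTg.trans (le_abs_self _)]

theorem gpf_chebyshev_two_param
    (α β p₁ p₂ x : ℝ) (hα : 0 < α) (hβ : 0 < β)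
    (hp₁ : p₁ ∈ Set.Ioc (0:ℝ) 1) (hp₂ : p₂ ∈ Set.Ioc (0:ℝ) 1) (hx : 0 < x)
    (f g v₁ v₂ w₁ w₂ : ℝ → ℝ)
    (hfb : ∀ τ ∈ Set.Icc (0:ℝ) x, 0 < v₁ τ ∧ v₁ τ ≤ f τ ∧ f τ ≤ v₂ τ)
    (hgb : ∀ τ ∈ Set.Icc (0:ℝ) x, 0 < w₁ τ ∧ w₁ τ ≤ g τ ∧ g τ ≤ w₂ τ)
    (hint1 : GpfIntegrable α p₁ x (fun _ => 1)) (hint2 : GpfIntegrable β p₂ x (fun _ => 1))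
    (hint3 : GpfIntegrable α p₁ x f) (hint4 : GpfIntegrable β p₂ x f)
    (hint5 : GpfIntegrable α p₁ x g) (hint6 : GpfIntegrable β p₂ x g)
    (hint7 : GpfIntegrable α p₁ x (fun τ => f τ * g τ))
    (hint8 : GpfIntegrable β p₂ x (fun τ => f τ * g τ))
    (hint9 : GpfIntegrable α p₁ x (fun τ => f τ ^ 2))
    (hint10 : GpfIntegrable β p₂ x (fun τ => f τ ^ 2))
    (hint11 : GpfIntegrable α p₁ x (fun τ => g τ ^ 2))
    (hint12 : GpfIntegrable β p₂ x (fun τ => g τ ^ 2))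
    (hint13 : GpfIntegrable α p₁ x (fun τ => (v₁ τ + v₂ τ) * f τ))
    (hint14 : GpfIntegrable β p₂ x (fun τ => (v₁ τ + v₂ τ) * f τ))
    (hint15 : GpfIntegrable α p₁ x (fun τ => v₁ τ * v₂ τ))
    (hint16 : GpfIntegrable β p₂ x (fun τ => v₁ τ * v₂ τ))
    (hint17 : GpfIntegrable α p₁ x (fun τ => (w₁ τ + w₂ τ) * g τ))
    (hint18 : GpfIntegrable β p₂ x (fun τ => (w₁ τ + w₂ τ) * g τ))
    (hint19 : GpfIntegrable α p₁ x (fun τ => w₁ τ * w₂ τ))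
    (hint20 : GpfIntegrable β p₂ x (fun τ => w₁ τ * w₂ τ))
    (A₁ : (ℝ → ℝ) → (ℝ → ℝ) → (ℝ → ℝ) → ℝ)
    (A₂ : (ℝ → ℝ) → (ℝ → ℝ) → (ℝ → ℝ) → ℝ)
    (hA₁ : ∀ u v w, A₁ u v w =
      gpf β p₂ x (fun _ => 1) *
          (gpf α p₁ x (fun τ => (v τ + w τ) * u τ)) ^ 2 /
          (4 * gpf α p₁ x (fun τ => v τ * w τ)) -
        gpf α p₁ x u * gpf β p₂ x u)
    (hA₂ : ∀ u v w, A₂ u v w =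
      gpf α p₁ x (fun _ => 1) *
          (gpf β p₂ x (fun τ => (v τ + w τ) * u τ)) ^ 2 /
          (4 * gpf β p₂ x (fun τ => v τ * w τ)) -
        gpf α p₁ x u * gpf β p₂ x u) :
    gpf α p₁ x (fun _ => 1) * gpf β p₂ x (fun τ => f τ * g τ) +
        gpf β p₂ x (fun _ => 1) * gpf α p₁ x (fun τ => f τ * g τ) -
        gpf α p₁ x f * gpf β p₂ x g - gpf β p₂ x f * gpf α p₁ x g ≤
      |A₁ f v₁ v₂ + A₂ f v₁ v₂| ^ ((1:ℝ)/2) * |A₁ g w₁ w₂ + A₂ g w₁ w₂| ^ ((1:ℝ)/2) :=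
  gpf_chebyshev_two_param_general α β p₁ p₂ x hα hβ hp₁ hp₂ hx f g v₁ v₂ w₁ w₂ hfb hgb hint3 hint4
    hint5 hint6 hint9 hint10 hint11 hint12 hint13 hint14 hint15 hint16 hint17 hint18 hint19 hint20
    A₁ A₂ hA₁ hA₂
end

section
/- Let α > 0, p ∈ (0,1], x > 0, and f, g positive integrable functions on [0,x] with 0 < v₁ ≤ f ≤ v₂ and 0 < w₁ ≤ g ≤ w₂ for positive integrable v₁, v₂, w₁, w₂. Then |I^{α,p}[1](x)·I^{α,p}[fg](x) - I^{α,p}[f](x)·I^{α,p}[g](x)| ≤ |A(f,v₁,v₂)(x) · A(g,w₁,w₂)(x)|^{1/2}, where A(u,v,w)(x) = I^{α,p}[1](x) · (I^{α,p}[(v+w)u](x))² / (4 I^{α,p}[vw](x)) - (I^{α,p}[u](x))². -/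
open MeasureTheory

/-- If a quadratic `a t² + 2 b t + c` is nonnegative everywhere, then `b² ≤ a c`. -/
lemma gpf_quad_key (a b c : ℝ) (h : ∀ t : ℝ, 0 ≤ a * t ^ 2 + 2 * b * t + c) :
    b ^ 2 ≤ a * c := by
  have hd : discrim a (2 * b) c ≤ 0 := by
    apply discrim_le_zero
    intro t
    have := h t
    nlinarith
  rw [discrim] at hd
  nlinarith

/-- Splitting an interval integral of a sum of three integrable functions. -/
lemma gpf_integral_three {a b : ℝ} {f1 f2 f3 : ℝ → ℝ}
    (h1 : IntervalIntegrable f1 volume a b) (h2 : IntervalIntegrable f2 volume a b)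
    (h3 : IntervalIntegrable f3 volume a b) :
    (∫ τ in a..b, (f1 τ + f2 τ + f3 τ)) =
      (∫ τ in a..b, f1 τ) + (∫ τ in a..b, f2 τ) + ∫ τ in a..b, f3 τ := by
  rw [intervalIntegral.integral_add (h1.add h2) h3, intervalIntegral.integral_add h1 h2]

set_option maxHeartbeats 1200000 in
theorem gpf_chebyshev_one_param
    (α p x : ℝ) (hα : 0 < α) (hp : p ∈ Set.Ioc (0:ℝ) 1) (hx : 0 < x)
    (f g v₁ v₂ w₁ w₂ : ℝ → ℝ)
    (hfb : ∀ τ ∈ Set.Icc (0:ℝ) x, 0 < v₁ τ ∧ v₁ τ ≤ f τ ∧ f τ ≤ v₂ τ)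
    (hgb : ∀ τ ∈ Set.Icc (0:ℝ) x, 0 < w₁ τ ∧ w₁ τ ≤ g τ ∧ g τ ≤ w₂ τ)
    (hint1 : GpfIntegrable α p x (fun _ => 1))
    (hint2 : GpfIntegrable α p x f) (hint3 : GpfIntegrable α p x g)
    (hint4 : GpfIntegrable α p x (fun τ => f τ * g τ))
    (hint5 : GpfIntegrable α p x (fun τ => f τ ^ 2))
    (hint6 : GpfIntegrable α p x (fun τ => g τ ^ 2))
    (hint7 : GpfIntegrable α p x (fun τ => (v₁ τ + v₂ τ) * f τ))
    (hint8 : GpfIntegrable α p x (fun τ => v₁ τ * v₂ τ))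
    (hint9 : GpfIntegrable α p x (fun τ => (w₁ τ + w₂ τ) * g τ))
    (hint10 : GpfIntegrable α p x (fun τ => w₁ τ * w₂ τ))
    (A : (ℝ → ℝ) → (ℝ → ℝ) → (ℝ → ℝ) → ℝ)
    (hA : ∀ u v w, A u v w =
      gpf α p x (fun _ => 1) *
          (gpf α p x (fun τ => (v τ + w τ) * u τ)) ^ 2 /
          (4 * gpf α p x (fun τ => v τ * w τ)) -
        (gpf α p x u) ^ 2) :
    |gpf α p x (fun _ => 1) * gpf α p x (fun τ => f τ * g τ) -
        gpf α p x f * gpf α p x g| ≤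
      |A f v₁ v₂ * A g w₁ w₂| ^ ((1:ℝ)/2) := by
  obtain ⟨hp0, hp1⟩ := hp
  set k : ℝ → ℝ := gpfKernel α p x with hk
  -- kernel positivity facts
  have hknn : ∀ τ ∈ Set.Icc (0:ℝ) x, 0 ≤ k τ := by
    intro τ hτ
    exact mul_nonneg (Real.exp_pos _).le (Real.rpow_nonneg (by linarith [hτ.2]) _)
  have hkpos : ∀ τ ∈ Set.Ioo (0:ℝ) x, 0 < k τ := by
    intro τ hτ
    exact mul_pos (Real.exp_pos _) (Real.rpow_pos_of_pos (by linarith [hτ.2]) _)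
  have hi1 : IntervalIntegrable (fun τ => k τ * (1:ℝ)) volume 0 x := hint1
  have hi2 : IntervalIntegrable (fun τ => k τ * f τ) volume 0 x := hint2
  have hi3 : IntervalIntegrable (fun τ => k τ * g τ) volume 0 x := hint3
  have hi4 : IntervalIntegrable (fun τ => k τ * (f τ * g τ)) volume 0 x := hint4
  have hi5 : IntervalIntegrable (fun τ => k τ * f τ ^ 2) volume 0 x := hint5
  have hi6 : IntervalIntegrable (fun τ => k τ * g τ ^ 2) volume 0 x := hint6
  have hi7 : IntervalIntegrable (fun τ => k τ * ((v₁ τ + v₂ τ) * f τ)) volume 0 x := hint7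
  have hi8 : IntervalIntegrable (fun τ => k τ * (v₁ τ * v₂ τ)) volume 0 x := hint8
  have hi9 : IntervalIntegrable (fun τ => k τ * ((w₁ τ + w₂ τ) * g τ)) volume 0 x := hint9
  have hi10 : IntervalIntegrable (fun τ => k τ * (w₁ τ * w₂ τ)) volume 0 x := hint10
  -- abbreviations for the plain integrals
  set I1 := ∫ τ in (0:ℝ)..x, k τ * 1 with hI1
  set If := ∫ τ in (0:ℝ)..x, k τ * f τ with hIf
  set Ig := ∫ τ in (0:ℝ)..x, k τ * g τ with hIg
  set Ifg := ∫ τ in (0:ℝ)..x, k τ * (f τ * g τ) with hIfg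
  set If2 := ∫ τ in (0:ℝ)..x, k τ * f τ ^ 2 with hIf2
  set Ig2 := ∫ τ in (0:ℝ)..x, k τ * g τ ^ 2 with hIg2
  set Ivf := ∫ τ in (0:ℝ)..x, k τ * ((v₁ τ + v₂ τ) * f τ) with hIvf
  set Ivv := ∫ τ in (0:ℝ)..x, k τ * (v₁ τ * v₂ τ) with hIvv
  set Iwg := ∫ τ in (0:ℝ)..x, k τ * ((w₁ τ + w₂ τ) * g τ) with hIwg
  set Iww := ∫ τ in (0:ℝ)..x, k τ * (w₁ τ * w₂ τ) with hIww
  have hI1nn : 0 ≤ I1 := by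
    apply intervalIntegral.integral_nonneg hx.le
    intro τ hτ
    have := hknn τ hτ; linarith
  -- single-function Cauchy–Schwarz at the integral level
  have cs_single : ∀ h : ℝ → ℝ,
      IntervalIntegrable (fun τ => k τ * h τ) volume 0 x →
      IntervalIntegrable (fun τ => k τ * h τ ^ 2) volume 0 x →
      (∫ τ in (0:ℝ)..x, k τ * h τ) ^ 2 ≤
        (∫ τ in (0:ℝ)..x, k τ * h τ ^ 2) * I1 := by
    intro h ih ih2
    apply gpf_quad_key
    intro s
    have hnn : 0 ≤ ∫ τ in (0:ℝ)..x,
        ((k τ * h τ ^ 2) * s ^ 2 + (k τ * h τ) * (2 * s) + k τ * 1) := by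
      apply intervalIntegral.integral_nonneg hx.le
      intro τ hτ
      have hkτ := hknn τ hτ
      have : (k τ * h τ ^ 2) * s ^ 2 + (k τ * h τ) * (2 * s) + k τ * 1
          = k τ * (s * h τ + 1) ^ 2 := by ring
      rw [this]
      exact mul_nonneg hkτ (sq_nonneg _)
    rw [gpf_integral_three (ih2.mul_const _) (ih.mul_const _) hi1,
      intervalIntegral.integral_mul_const, intervalIntegral.integral_mul_const] at hnn
    nlinarith [hnn]
  -- combined Cauchy–Schwarz : T² ≤ Tf * Tg
  have hTf : If ^ 2 ≤ If2 * I1 := cs_single f hi2 hi5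
  have hTg : Ig ^ 2 ≤ Ig2 * I1 := cs_single g hi3 hi6
  have hT : (I1 * Ifg - If * Ig) ^ 2 ≤ (I1 * Ig2 - Ig ^ 2) * (I1 * If2 - If ^ 2) := by
    apply gpf_quad_key
    intro t
    -- consider h = f + t g
    have e1 : (fun τ => k τ * (f τ + t * g τ))
        = fun τ => k τ * f τ + t * (k τ * g τ) := by funext τ; ring
    have e2 : (fun τ => k τ * (f τ + t * g τ) ^ 2)
        = fun τ => (k τ * f τ ^ 2) + (2 * t) * (k τ * (f τ * g τ))
            + (t ^ 2) * (k τ * g τ ^ 2) := by funext τ; ring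
    have ih : IntervalIntegrable (fun τ => k τ * (f τ + t * g τ)) volume 0 x := by
      rw [e1]; exact hi2.add (hi3.const_mul t)
    have ih2 : IntervalIntegrable (fun τ => k τ * (f τ + t * g τ) ^ 2) volume 0 x := by
      rw [e2]
      exact (hi5.add (hi4.const_mul _)).add (hi6.const_mul _)
    have hcs := cs_single (fun τ => f τ + t * g τ) ih ih2
    have v1 : (∫ τ in (0:ℝ)..x, k τ * (f τ + t * g τ)) = If + t * Ig := by
      rw [e1, intervalIntegral.integral_add hi2 (hi3.const_mul t),
        intervalIntegral.integral_const_mul]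
    have v2 : (∫ τ in (0:ℝ)..x, k τ * (f τ + t * g τ) ^ 2)
        = If2 + 2 * t * Ifg + t ^ 2 * Ig2 := by
      rw [e2, gpf_integral_three hi5 (hi4.const_mul _) (hi6.const_mul _),
        intervalIntegral.integral_const_mul, intervalIntegral.integral_const_mul]
    rw [v1, v2] at hcs
    nlinarith [hcs]
  -- nonnegativity of the diagonal terms
  have hTf0 : 0 ≤ I1 * If2 - If ^ 2 := by nlinarith [hTf]
  have hTg0 : 0 ≤ I1 * Ig2 - Ig ^ 2 := by nlinarith [hTg]
  -- positivity of the integrals of v₁v₂ and w₁w₂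
  have hIvvpos : 0 < Ivv := by
    apply intervalIntegral.intervalIntegral_pos_of_pos_on hi8 _ hx
    intro τ hτ
    obtain ⟨h1, h2, h3⟩ := hfb τ (Set.Ioo_subset_Icc_self hτ)
    exact mul_pos (hkpos τ hτ) (mul_pos h1 (lt_of_lt_of_le h1 (h2.trans h3)))
  have hIwwpos : 0 < Iww := by
    apply intervalIntegral.intervalIntegral_pos_of_pos_on hi10 _ hx
    intro τ hτ
    obtain ⟨h1, h2, h3⟩ := hgb τ (Set.Ioo_subset_Icc_self hτ)
    exact mul_pos (hkpos τ hτ) (mul_pos h1 (lt_of_lt_of_le h1 (h2.trans h3)))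
  -- pointwise bound: I[f²] + I[v₁v₂] ≤ I[(v₁+v₂)f]
  have hmonof : If2 + Ivv ≤ Ivf := by
    have := intervalIntegral.integral_mono_on (f := fun τ => k τ * f τ ^ 2 + k τ * (v₁ τ * v₂ τ))
      (g := fun τ => k τ * ((v₁ τ + v₂ τ) * f τ)) hx.le (hi5.add hi8) hi7 ?_
    · rwa [intervalIntegral.integral_add hi5 hi8] at this
    · intro τ hτ
      obtain ⟨h1, h2, h3⟩ := hfb τ hτ
      have hkτ := hknn τ hτ
      nlinarith [mul_nonneg hkτ (mul_nonneg (sub_nonneg.2 h3) (sub_nonneg.2 h2))]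
  have hmonog : Ig2 + Iww ≤ Iwg := by
    have := intervalIntegral.integral_mono_on (f := fun τ => k τ * g τ ^ 2 + k τ * (w₁ τ * w₂ τ))
      (g := fun τ => k τ * ((w₁ τ + w₂ τ) * g τ)) hx.le (hi6.add hi10) hi9 ?_
    · rwa [intervalIntegral.integral_add hi6 hi10] at this
    · intro τ hτ
      obtain ⟨h1, h2, h3⟩ := hgb τ hτ
      have hkτ := hknn τ hτ
      nlinarith [mul_nonneg hkτ (mul_nonneg (sub_nonneg.2 h3) (sub_nonneg.2 h2))]
  -- the `A`-type quantities in the unnormalized world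
  set Af := I1 * (Ivf ^ 2 / (4 * Ivv)) - If ^ 2 with hAf
  set Ag := I1 * (Iwg ^ 2 / (4 * Iww)) - Ig ^ 2 with hAg
  have hAMf : If2 ≤ Ivf ^ 2 / (4 * Ivv) := by
    rw [le_div_iff₀ (by linarith)]
    nlinarith [sq_nonneg (Ivf - 2 * Ivv)]
  have hAMg : Ig2 ≤ Iwg ^ 2 / (4 * Iww) := by
    rw [le_div_iff₀ (by linarith)]
    nlinarith [sq_nonneg (Iwg - 2 * Iww)]
  have hTfAf : I1 * If2 - If ^ 2 ≤ Af := by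
    have := mul_le_mul_of_nonneg_left hAMf hI1nn
    rw [hAf]; linarith
  have hTgAg : I1 * Ig2 - Ig ^ 2 ≤ Ag := by
    have := mul_le_mul_of_nonneg_left hAMg hI1nn
    rw [hAg]; linarith
  have hAf0 : 0 ≤ Af := le_trans hTf0 hTfAf
  have hAg0 : 0 ≤ Ag := le_trans hTg0 hTgAg
  -- the unnormalized inequality
  have hmain : |I1 * Ifg - If * Ig| ≤ Real.sqrt (Af * Ag) := by
    rw [← Real.sqrt_sq_eq_abs]
    apply Real.sqrt_le_sqrt
    calc (I1 * Ifg - If * Ig) ^ 2 ≤ (I1 * Ig2 - Ig ^ 2) * (I1 * If2 - If ^ 2) := hT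
      _ ≤ Ag * Af := mul_le_mul hTgAg hTfAf hTf0 hAg0
      _ = Af * Ag := mul_comm _ _
  -- now translate to the normalized (gpf) world
  set c : ℝ := 1 / (p ^ α * Real.Gamma α) with hc
  have hcpos : 0 < c := by
    rw [hc]
    have h1 : (0:ℝ) < p ^ α := Real.rpow_pos_of_pos hp0 α
    have h2 : 0 < Real.Gamma α := Real.Gamma_pos_of_pos hα
    positivity
  have hgpf : ∀ h : ℝ → ℝ, gpf α p x h = c * ∫ τ in (0:ℝ)..x, k τ * h τ := by
    intro h; rfl
  rw [hA, hA, hgpf, hgpf, hgpf, hgpf, hgpf, hgpf, hgpf, hgpf]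
  have hone : (∫ τ in (0:ℝ)..x, k τ * (fun _ : ℝ => (1:ℝ)) τ) = I1 := by rw [hI1]
  rw [hone]
  have eAf : c * I1 * (c * Ivf) ^ 2 / (4 * (c * Ivv)) - (c * If) ^ 2 = c ^ 2 * Af := by
    rw [hAf]
    field_simp
  have eAg : c * I1 * (c * Iwg) ^ 2 / (4 * (c * Iww)) - (c * Ig) ^ 2 = c ^ 2 * Ag := by
    rw [hAg]
    field_simp
  rw [eAf, eAg]
  have eL : c * I1 * (c * Ifg) - c * If * (c * Ig) = c ^ 2 * (I1 * Ifg - If * Ig) := by ring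
  rw [eL, abs_mul, abs_of_nonneg (sq_nonneg c)]
  have eR : |c ^ 2 * Af * (c ^ 2 * Ag)| = (c ^ 2) ^ 2 * (Af * Ag) := by
    rw [abs_of_nonneg (by positivity)]
    ring
  rw [eR, ← Real.sqrt_eq_rpow, Real.sqrt_mul (by positivity),
    Real.sqrt_sq (sq_nonneg c)]
  exact mul_le_mul_of_nonneg_left hmain (sq_nonneg c)
end

section
/- Let α, β > 0, p₁, p₂ ∈ (0,1], x > 0, and f, g positive integrable on [0,x]. Then the double GPF integral of H(τ,ξ) = (f(τ)-f(ξ))(g(τ)-g(ξ)) over (0,x)² with kernel (1/(p₁^α Γ(α) p₂^β Γ(β))) e^{((p₁-1)/p₁)(x-τ)} e^{((p₂-1)/p₂)(x-ξ)} (x-τ)^{α-1}(x-ξ)^{β-1} equals I^{β,p₂}[1](x)·I^{α,p₁}[fg](x) + I^{α,p₁}[1](x)·I^{β,p₂}[fg](x) - I^{α,p₁}[f](x)·I^{β,p₂}[g](x) - I^{β,p₂}[f](x)·I^{α,p₁}[g](x). -/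
open MeasureTheory

private lemma integral_comb {x : ℝ} {u v w z : ℝ → ℝ} (a b c d : ℝ)
    (hu : IntervalIntegrable u volume 0 x)
    (hv : IntervalIntegrable v volume 0 x)
    (hw : IntervalIntegrable w volume 0 x)
    (hz : IntervalIntegrable z volume 0 x) :
    (∫ t in (0:ℝ)..x, (a * u t + b * v t + c * w t + d * z t))
      = a * (∫ t in (0:ℝ)..x, u t) + b * (∫ t in (0:ℝ)..x, v t)
        + c * (∫ t in (0:ℝ)..x, w t) + d * (∫ t in (0:ℝ)..x, z t) := by
  rw [intervalIntegral.integral_add (((hu.const_mul a).add (hv.const_mul b)).add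
        (hw.const_mul c)) (hz.const_mul d),
      intervalIntegral.integral_add ((hu.const_mul a).add (hv.const_mul b)) (hw.const_mul c),
      intervalIntegral.integral_add (hu.const_mul a) (hv.const_mul b),
      intervalIntegral.integral_const_mul, intervalIntegral.integral_const_mul,
      intervalIntegral.integral_const_mul, intervalIntegral.integral_const_mul]

theorem gpf_korkine_identity
    (α β p₁ p₂ x : ℝ) (hα : 0 < α) (hβ : 0 < β)
    (hp₁ : p₁ ∈ Set.Ioc (0:ℝ) 1) (hp₂ : p₂ ∈ Set.Ioc (0:ℝ) 1) (hx : 0 < x)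
    (f g : ℝ → ℝ)
    (hfpos : ∀ τ ∈ Set.Icc (0:ℝ) x, 0 < f τ)
    (hgpos : ∀ τ ∈ Set.Icc (0:ℝ) x, 0 < g τ)
    (h0α : GpfIntegrable α p₁ x (fun _ => 1))
    (h0β : GpfIntegrable β p₂ x (fun _ => 1))
    (hfα : GpfIntegrable α p₁ x f) (hfβ : GpfIntegrable β p₂ x f)
    (hgα : GpfIntegrable α p₁ x g) (hgβ : GpfIntegrable β p₂ x g)
    (hfgα : GpfIntegrable α p₁ x (fun τ => f τ * g τ))
    (hfgβ : GpfIntegrable β p₂ x (fun τ => f τ * g τ)) :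
    (∫ τ in (0:ℝ)..x, ∫ ξ in (0:ℝ)..x,
        (1 / (p₁ ^ α * Real.Gamma α)) * (1 / (p₂ ^ β * Real.Gamma β)) *
          (gpfKernel α p₁ x τ * gpfKernel β p₂ x ξ) *
          ((f τ - f ξ) * (g τ - g ξ))) =
      gpf β p₂ x (fun _ => 1) * gpf α p₁ x (fun τ => f τ * g τ) +
        gpf α p₁ x (fun _ => 1) * gpf β p₂ x (fun τ => f τ * g τ) -
        gpf α p₁ x f * gpf β p₂ x g - gpf β p₂ x f * gpf α p₁ x g := by
  simp only [GpfIntegrable] at h0α h0β hfα hfβ hgα hgβ hfgα hfgβ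
  set c₁ := (1 / (p₁ ^ α * Real.Gamma α)) with hc₁
  set c₂ := (1 / (p₂ ^ β * Real.Gamma β)) with hc₂
  set K₁ := gpfKernel α p₁ x with hK₁
  set K₂ := gpfKernel β p₂ x with hK₂
  set I₂1 := ∫ ξ in (0:ℝ)..x, K₂ ξ * 1 with hI₂1
  set I₂f := ∫ ξ in (0:ℝ)..x, K₂ ξ * f ξ with hI₂f
  set I₂g := ∫ ξ in (0:ℝ)..x, K₂ ξ * g ξ with hI₂g
  set I₂fg := ∫ ξ in (0:ℝ)..x, K₂ ξ * (f ξ * g ξ) with hI₂fg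
  have hinner : ∀ τ : ℝ,
      (∫ ξ in (0:ℝ)..x, c₁ * c₂ * (K₁ τ * K₂ ξ) * ((f τ - f ξ) * (g τ - g ξ)))
        = (c₁ * c₂ * (K₁ τ * (f τ * g τ))) * I₂1 + (-(c₁ * c₂ * (K₁ τ * f τ))) * I₂g
          + (-(c₁ * c₂ * (K₁ τ * g τ))) * I₂f + (c₁ * c₂ * K₁ τ) * I₂fg := by
    intro τ
    have : (∫ ξ in (0:ℝ)..x, c₁ * c₂ * (K₁ τ * K₂ ξ) * ((f τ - f ξ) * (g τ - g ξ)))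
        = ∫ ξ in (0:ℝ)..x,
            ((c₁ * c₂ * (K₁ τ * (f τ * g τ))) * (K₂ ξ * 1)
              + (-(c₁ * c₂ * (K₁ τ * f τ))) * (K₂ ξ * g ξ)
              + (-(c₁ * c₂ * (K₁ τ * g τ))) * (K₂ ξ * f ξ)
              + (c₁ * c₂ * K₁ τ) * (K₂ ξ * (f ξ * g ξ))) :=
      intervalIntegral.integral_congr (fun ξ _ => by ring)
    rw [this, integral_comb _ _ _ _ h0β hgβ hfβ hfgβ]
  have houter : (∫ τ in (0:ℝ)..x, ∫ ξ in (0:ℝ)..x,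
      c₁ * c₂ * (K₁ τ * K₂ ξ) * ((f τ - f ξ) * (g τ - g ξ)))
      = ∫ τ in (0:ℝ)..x,
          ((c₁ * c₂ * I₂1) * (K₁ τ * (f τ * g τ)) + (-(c₁ * c₂ * I₂g)) * (K₁ τ * f τ)
            + (-(c₁ * c₂ * I₂f)) * (K₁ τ * g τ) + (c₁ * c₂ * I₂fg) * (K₁ τ * 1)) :=
    intervalIntegral.integral_congr (fun τ _ => by rw [hinner τ]; ring)
  rw [houter, integral_comb _ _ _ _ hfgα hfα hgα h0α]
  simp only [gpf, ← hc₁, ← hc₂, ← hK₁, ← hK₂, ← hI₂1, ← hI₂f, ← hI₂g, ← hI₂fg]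
  ring
end
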